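/- Hard one-step strengthening is not monotone: there exist syntactic protocols Q ⊆ P and an initial gossip graph G with Q^□(G) ⊄ P^□(G). Concretely, let G be the 'spaceship' graph on agents {0,1,2,3} with N the reflexive closure of {(0,1),(3,1),(1,2)} and S the identity, let P = LNS and Q = LNS^♦ (the soft look-ahead strengthening of LNS). Then Q ⊆ P (the extension of LNS^♦ is contained in that of LNS on every initial gossip graph), yet the call sequence 01;31;12;02;32 belongs to (LNS^♦)^□(G) but not to LNS^□(G); hence (LNS^♦)^□(G) ⊄ LNS^□(G). -/

import Mathlib

set_option maxHeartbeats 1000000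

structure GossipGraph (A : Type) : Type where
  N : A → A → Prop
  S : A → A → Prop
  refl_S : ∀ a, S a a
  S_sub_N : ∀ a b, S a b → N a b

namespace Gossip

variable {A : Type}

def Initial (G : GossipGraph A) : Prop := ∀ a b, G.S a b ↔ a = b

def doCall (G : GossipGraph A) (c : A × A) : GossipGraph A where
  N x y := G.N x y ∨ ((x = c.1 ∨ x = c.2) ∧ (G.N c.1 y ∨ G.N c.2 y))
  S x y := G.S x y ∨ ((x = c.1 ∨ x = c.2) ∧ (G.S c.1 y ∨ G.S c.2 y))
  refl_S a := Or.inl (G.refl_S a)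
  S_sub_N a b h := by
    rcases h with h | ⟨h1, h2 | h2⟩
    · exact Or.inl (G.S_sub_N a b h)
    · exact Or.inr ⟨h1, Or.inl (G.S_sub_N _ _ h2)⟩
    · exact Or.inr ⟨h1, Or.inr (G.S_sub_N _ _ h2)⟩

def doCalls (G : GossipGraph A) (σ : List (A × A)) : GossipGraph A :=
  σ.foldl doCall G

def PossibleSeq (G : GossipGraph A) : List (A × A) → Prop
  | [] => True
  | c :: σ => c.1 ≠ c.2 ∧ G.N c.1 c.2 ∧ PossibleSeq (doCall G c) σ

mutual
  inductive Form (A : Type) : Type where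
    | top : Form A
    | atomN : A → A → Form A
    | atomS : A → A → Form A
    | neg : Form A → Form A
    | conj : Form A → Form A → Form A
    | K : A → (A → A → Form A) → Form A → Form A
    | box : Prog A → Form A → Form A
  inductive Prog (A : Type) : Type where
    | test : Form A → Prog A
    | call : A → A → Prog A
    | seq : Prog A → Prog A → Prog A
    | cup : Prog A → Prog A → Prog A
    | star : Prog A → Prog A
end

abbrev Protocol (A : Type) := A → A → Form A

inductive Epi (G : GossipGraph A) (perm : List (A × A) → (A × A) → Prop) (a : A) :
    List (A × A) → List (A × A) → Prop where
  | refl : Epi G perm a [] []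
  | call_out {σ τ : List (A × A)} {b : A} :
      Epi G perm a σ τ →
      (∀ x, (doCalls G σ).N b x ↔ (doCalls G τ).N b x) →
      (∀ x, (doCalls G σ).S b x ↔ (doCalls G τ).S b x) →
      perm σ (a, b) → perm τ (a, b) →
      Epi G perm a (σ ++ [(a, b)]) (τ ++ [(a, b)])
  | call_in {σ τ : List (A × A)} {b : A} :
      Epi G perm a σ τ →
      (∀ x, (doCalls G σ).N b x ↔ (doCalls G τ).N b x) →
      (∀ x, (doCalls G σ).S b x ↔ (doCalls G τ).S b x) →
      perm σ (b, a) → perm τ (b, a) →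
      Epi G perm a (σ ++ [(b, a)]) (τ ++ [(b, a)])
  | other {σ τ : List (A × A)} {c d e f : A} :
      Epi G perm a σ τ →
      c ≠ a → d ≠ a → e ≠ a → f ≠ a →
      perm σ (c, d) → perm τ (e, f) →
      Epi G perm a (σ ++ [(c, d)]) (τ ++ [(e, f)])

mutual
  def Sat (G : GossipGraph A) : List (A × A) → Form A → Prop
    | _, Form.top => True
    | σ, Form.atomN a b => (doCalls G σ).N a b
    | σ, Form.atomS a b => (doCalls G σ).S a b
    | σ, Form.neg φ => ¬ Sat G σ φ
    | σ, Form.conj φ ψ => Sat G σ φ ∧ Sat G σ ψ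
    | σ, Form.K a P φ =>
        ∀ τ, Epi G (fun ρ c => c.1 ≠ c.2 ∧ (doCalls G ρ).N c.1 c.2 ∧ Sat G ρ (P c.1 c.2)) a τ σ →
          Sat G τ φ
    | σ, Form.box π φ => ∀ τ, ProgRel G π σ τ → Sat G τ φ
  def ProgRel (G : GossipGraph A) : Prog A → List (A × A) → List (A × A) → Prop
    | Prog.test φ, σ, τ => σ = τ ∧ Sat G σ φ
    | Prog.call a b, σ, τ => a ≠ b ∧ (doCalls G σ).N a b ∧ τ = σ ++ [(a, b)]
    | Prog.seq π π', σ, τ => ∃ ρ, ProgRel G π σ ρ ∧ ProgRel G π' ρ τ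
    | Prog.cup π π', σ, τ => ProgRel G π σ τ ∨ ProgRel G π' σ τ
    | Prog.star π, σ, τ => Relation.ReflTransGen (fun x y => ProgRel G π x y) σ τ
end


/-- A call `ab` is `P`-permitted at `(G, σ)` iff `a ≠ b`, `N^σ a b` and `G,σ ⊨ P_{ab}`. -/
def Permits (G : GossipGraph A) (P : Protocol A) (σ : List (A × A)) (c : A × A) : Prop :=
  c.1 ≠ c.2 ∧ (doCalls G σ).N c.1 c.2 ∧ Sat G σ (P c.1 c.2)

/-- The least set of call sequences containing `ε` and closed under adding permitted calls. -/
inductive Ext (G : GossipGraph A) (perm : List (A × A) → (A × A) → Prop) : List (A × A) → Prop where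
  | nil : Ext G perm []
  | snoc {σ : List (A × A)} {c : A × A} : Ext G perm σ → perm σ c → Ext G perm (σ ++ [c])

/-- The extension of a syntactic protocol `P` on an (initial) gossip graph `G`. -/
def extension (P : Protocol A) (G : GossipGraph A) : Set (List (A × A)) :=
  { σ | Ext G (Permits G P) σ }

/-- A formula is valid iff it is true at every gossip state, i.e. at every pair of an
initial gossip graph and a call sequence possible on it. -/
def Valid (φ : Form A) : Prop :=
  ∀ G : GossipGraph A, Initial G → ∀ σ : List (A × A), PossibleSeq G σ → Sat G σ φ

def impF (φ ψ : Form A) : Form A := Form.neg (Form.conj φ (Form.neg ψ))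
def orF (φ ψ : Form A) : Form A := Form.neg (Form.conj (Form.neg φ) (Form.neg ψ))
def iffF (φ ψ : Form A) : Form A := Form.conj (impF φ ψ) (impF ψ φ)
/-- The epistemic "possibility" dual `K̂ := ¬K¬`. -/
def hatK (a : A) (P : Protocol A) (φ : Form A) : Form A := Form.neg (Form.K a P (Form.neg φ))

/-- A semantic protocol, as raw data: a map from (initial) gossip graphs to sets of call
sequences. -/
abbrev RawSem (A : Type) := GossipGraph A → Set (List (A × A))

/-- For a semantic protocol, a call `c` is permitted at `(G,σ)` iff `σ;c ∈ P(G)`. -/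
def semPerm (Q : RawSem A) (G : GossipGraph A) (σ : List (A × A)) (c : A × A) : Prop :=
  σ ++ [c] ∈ Q G

/-- `σ` is terminal (in `Q(G)`) iff no further call is permitted. -/
def TerminalIn (Q : RawSem A) (G : GossipGraph A) (σ : List (A × A)) : Prop :=
  ∀ c : A × A, σ ++ [c] ∉ Q G

/-- All agents are experts: everyone knows all secrets. -/
def AllExpert (G : GossipGraph A) : Prop := ∀ a b : A, G.S a b

/-- A semantic protocol: assigns to each initial gossip graph a set of call sequences
possible on it, containing the empty sequence and closed under prefixes. -/
structure SemProtocol (A : Type) : Type where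
  ext : GossipGraph A → Set (List (A × A))
  nil_mem : ∀ G : GossipGraph A, Initial G → [] ∈ ext G
  prefix_closed : ∀ G : GossipGraph A, Initial G → ∀ σ c, σ ++ [c] ∈ ext G → σ ∈ ext G
  possible : ∀ G : GossipGraph A, Initial G → ∀ σ ∈ ext G, PossibleSeq G σ

/-- A semantic protocol is epistemic iff a call `ab` is permitted at `(G,σ)` exactly when it
is permitted at all states that agent `a` cannot distinguish from `(G,σ)`. -/
def SemEpistemic (Q : RawSem A) : Prop :=
  ∀ G : GossipGraph A, Initial G → ∀ σ ∈ Q G, ∀ a b : A, a ≠ b →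
    (σ ++ [(a, b)] ∈ Q G ↔ ∀ τ, Epi G (semPerm Q G) a τ σ → τ ++ [(a, b)] ∈ Q G)

/-- Relabelling the agents of a gossip graph along a permutation. -/
def mapGraph (J : Equiv.Perm A) (G : GossipGraph A) : GossipGraph A where
  N x y := G.N (J.symm x) (J.symm y)
  S x y := G.S (J.symm x) (J.symm y)
  refl_S a := G.refl_S _
  S_sub_N a b h := G.S_sub_N _ _ h

/-- Relabelling a call sequence, callwise. -/
def mapSeq (J : Equiv.Perm A) (σ : List (A × A)) : List (A × A) :=
  σ.map (fun c => (J c.1, J c.2))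

mutual
  /-- Relabelling the agents in a formula along a permutation. -/
  def mapForm (J : Equiv.Perm A) : Form A → Form A
    | Form.top => Form.top
    | Form.atomN a b => Form.atomN (J a) (J b)
    | Form.atomS a b => Form.atomS (J a) (J b)
    | Form.neg φ => Form.neg (mapForm J φ)
    | Form.conj φ ψ => Form.conj (mapForm J φ) (mapForm J ψ)
    | Form.K a P φ => Form.K (J a) (fun x y => mapForm J (P (J.symm x) (J.symm y))) (mapForm J φ)
    | Form.box π φ => Form.box (mapProg J π) (mapForm J φ)
  /-- Relabelling the agents in a program along a permutation. -/
  def mapProg (J : Equiv.Perm A) : Prog A → Prog A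
    | Prog.test φ => Prog.test (mapForm J φ)
    | Prog.call a b => Prog.call (J a) (J b)
    | Prog.seq π π' => Prog.seq (mapProg J π) (mapProg J π')
    | Prog.cup π π' => Prog.cup (mapProg J π) (mapProg J π')
    | Prog.star π => Prog.star (mapProg J π)
end

/-- A semantic protocol is symmetric iff it commutes with relabelling of the agents. -/
def SemSymmetric (Q : RawSem A) : Prop :=
  ∀ (J : Equiv.Perm A) (G : GossipGraph A), Initial G →
    Q (mapGraph J G) = mapSeq J '' Q G

def listConj (l : List (Form A)) : Form A := l.foldr Form.conj Form.top
def listDisj (l : List (Form A)) : Form A := l.foldr orF (Form.neg Form.top)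

noncomputable def pairsList (A : Type) [Fintype A] : List (A × A) := (Finset.univ : Finset (A × A)).toList
noncomputable def distinctPairs (A : Type) [Fintype A] [DecidableEq A] : List (A × A) :=
  (pairsList A).filter (fun c => decide (c.1 ≠ c.2))

/-- The formula `Ex`: all agents are experts. -/
noncomputable def ExForm (A : Type) [Fintype A] : Form A :=
  listConj ((pairsList A).map (fun c => Form.atomS c.1 c.2))

/-- `Ex ∨ ⋁_{i≠j} (N_ij ∧ P_ij)`. -/
noncomputable def oneStepBody (A : Type) [Fintype A] [DecidableEq A] (P : Protocol A) : Form A :=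
  orF (ExForm A) (listDisj ((distinctPairs A).map (fun c => Form.conj (Form.atomN c.1 c.2) (P c.1 c.2))))

/-- Hard one-step strengthening: `P_ab ∧ K_a^P [ab](Ex ∨ ⋁_{i≠j}(N_ij ∧ P_ij))`. -/
noncomputable def hardOneStep {A : Type} [Fintype A] [DecidableEq A] (P : Protocol A) : Protocol A :=
  fun a b => Form.conj (P a b) (Form.K a P (Form.box (Prog.call a b) (oneStepBody A P)))

/-- Soft one-step strengthening: `P_ab ∧ K̂_a^P [ab](Ex ∨ ⋁_{i≠j}(N_ij ∧ P_ij))`. -/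
noncomputable def softOneStep {A : Type} [Fintype A] [DecidableEq A] (P : Protocol A) : Protocol A :=
  fun a b => Form.conj (P a b) (hatK a P (Form.box (Prog.call a b) (oneStepBody A P)))

/-- The protocol `P` as a program:
`(⋃_{a≠b} ?(N_ab ∧ P_ab);ab)* ; ?⋀_{a≠b} ¬(N_ab ∧ P_ab)`. -/
noncomputable def protProg (A : Type) [Fintype A] [DecidableEq A] (P : Protocol A) : Prog A :=
  Prog.seq
    (Prog.star (((distinctPairs A).map (fun c =>
      Prog.seq (Prog.test (Form.conj (Form.atomN c.1 c.2) (P c.1 c.2))) (Prog.call c.1 c.2))).foldr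
        Prog.cup (Prog.test (Form.neg Form.top))))
    (Prog.test (listConj ((distinctPairs A).map (fun c =>
      Form.neg (Form.conj (Form.atomN c.1 c.2) (P c.1 c.2))))))

/-- Hard look-ahead strengthening: `P_ab ∧ K_a^P [ab]⟨P⟩Ex`. -/
noncomputable def hardLookAhead {A : Type} [Fintype A] [DecidableEq A] (P : Protocol A) : Protocol A :=
  fun a b => Form.conj (P a b)
    (Form.K a P (Form.box (Prog.call a b)
      (Form.neg (Form.box (protProg A P) (Form.neg (ExForm A))))))

/-- Soft look-ahead strengthening: `P_ab ∧ K̂_a^P [ab]⟨P⟩Ex`. -/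
noncomputable def softLookAhead {A : Type} [Fintype A] [DecidableEq A] (P : Protocol A) : Protocol A :=
  fun a b => Form.conj (P a b)
    (hatK a P (Form.box (Prog.call a b)
      (Form.neg (Form.box (protProg A P) (Form.neg (ExForm A))))))

/-- Hard uniform backward defoliation of a semantic protocol. -/
def HUBD (Q : RawSem A) : RawSem A := fun G =>
  { σ | σ ∈ Q G ∧ (σ = [] ∨ ∃ τ : List (A × A), ∃ a b : A, σ = τ ++ [(a, b)] ∧
      ∀ τ', Epi G (semPerm Q G) a τ' τ →
        (τ' ++ [(a, b)] ∈ Q G ∧ TerminalIn Q G (τ' ++ [(a, b)])) →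
          AllExpert (doCalls G (τ' ++ [(a, b)]))) }

/-- Soft uniform backward defoliation of a semantic protocol. -/
def SUBD (Q : RawSem A) : RawSem A := fun G =>
  { σ | σ ∈ Q G ∧ (σ = [] ∨ ∃ τ : List (A × A), ∃ a b : A, σ = τ ++ [(a, b)] ∧
      ∃ τ', Epi G (semPerm Q G) a τ' τ ∧
        ((τ' ++ [(a, b)] ∈ Q G ∧ TerminalIn Q G (τ' ++ [(a, b)])) →
          AllExpert (doCalls G (τ' ++ [(a, b)])))) }

/-- The syntactic protocol LNS: `LNS_ab := ¬ S_ab`. -/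
def LNSsyn (A : Type) : Protocol A := fun a b => Form.neg (Form.atomS a b)

/-- LNS-permitted: call `ab` permitted at `(G,σ)` iff `N^σ a b` and not `S^σ a b`. -/
def LNSperm (G : GossipGraph A) (σ : List (A × A)) (c : A × A) : Prop :=
  c.1 ≠ c.2 ∧ (doCalls G σ).N c.1 c.2 ∧ ¬ (doCalls G σ).S c.1 c.2

/-- LNS as a semantic protocol. -/
def LNSsem : RawSem A := fun G => { σ | Ext G (LNSperm G) σ }

/-- A semantic protocol is strongly successful on `G` iff every terminal sequence makes
all agents experts. -/
def StronglySuccessfulOn (Q : RawSem A) (G : GossipGraph A) : Prop :=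
  ∀ σ ∈ Q G, TerminalIn Q G σ → AllExpert (doCalls G σ)

/-- A semantic protocol is weakly successful on `G` iff some terminal sequence makes
all agents experts. -/
def WeaklySuccessfulOn (Q : RawSem A) (G : GossipGraph A) : Prop :=
  ∃ σ ∈ Q G, TerminalIn Q G σ ∧ AllExpert (doCalls G σ)


/-- The "spaceship" initial gossip graph on agents 0,1,2,3:
`N` is the reflexive closure of {(0,1),(3,1),(1,2)} and `S` is the identity. -/
def spaceship : GossipGraph (Fin 4) where
  N x y := x = y ∨ (x = 0 ∧ y = 1) ∨ (x = 3 ∧ y = 1) ∨ (x = 1 ∧ y = 2)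
  S x y := x = y
  refl_S a := rfl
  S_sub_N a b h := Or.inl h

/-!
Under LNS, agent 3 cannot tell `01;31;12;02` from `01;31;02;12`, and after `32` the latter is
stuck with agent 0 not an expert; so LNS^□ forbids the final call `32`. Under LNS^♦, `02` is not
permitted after `01;31`: agent 0 considers `01;31` and `01;12` possible, and after `02` neither
has a successful LNS continuation. So under LNS^♦ agent 3 knows the actual sequence, which ends
with all agents experts, and every earlier call of `01;31;12;02;32` leaves, in each alternative
its caller considers possible, some LNS^♦-permitted call. All of this is a finite check.
-/

section Semantics

variable {G : GossipGraph A} {σ τ : List (A × A)}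

@[simp] lemma sat_atomN {a b : A} : Sat G σ (Form.atomN a b) ↔ (doCalls G σ).N a b := Iff.rfl

@[simp] lemma sat_atomS {a b : A} : Sat G σ (Form.atomS a b) ↔ (doCalls G σ).S a b := Iff.rfl

@[simp] lemma sat_neg {φ : Form A} : Sat G σ (Form.neg φ) ↔ ¬ Sat G σ φ := Iff.rfl

@[simp] lemma sat_conj {φ ψ : Form A} : Sat G σ (Form.conj φ ψ) ↔ Sat G σ φ ∧ Sat G σ ψ :=
  Iff.rfl

lemma sat_K {a : A} {P : Protocol A} {φ : Form A} :
    Sat G σ (Form.K a P φ) ↔ ∀ τ, Epi G (Permits G P) a τ σ → Sat G τ φ := Iff.rfl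

lemma sat_hatK {a : A} {P : Protocol A} {φ : Form A} :
    Sat G σ (hatK a P φ) ↔ ∃ τ, Epi G (Permits G P) a τ σ ∧ Sat G τ φ := by
  simp [hatK, sat_K]

lemma sat_box_call {a b : A} {φ : Form A} :
    Sat G σ (Form.box (Prog.call a b) φ) ↔
      (a ≠ b → (doCalls G σ).N a b → Sat G (σ ++ [(a, b)]) φ) := by
  simp only [Sat, ProgRel]
  grind

@[simp] lemma sat_orF {φ ψ : Form A} : Sat G σ (orF φ ψ) ↔ Sat G σ φ ∨ Sat G σ ψ := by
  simp [orF, or_iff_not_and_not]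

lemma sat_listConj {l : List (Form A)} : Sat G σ (listConj l) ↔ ∀ φ ∈ l, Sat G σ φ := by
  induction l with
  | nil => exact iff_of_true trivial (by simp)
  | cons φ l ih => simp [listConj, ← ih]

lemma sat_listDisj {l : List (Form A)} : Sat G σ (listDisj l) ↔ ∃ φ ∈ l, Sat G σ φ := by
  induction l with
  | nil => simp [listDisj, Sat]
  | cons φ l ih => simp [listDisj, ← ih]

lemma progRel_foldr_cup {l : List (Prog A)} {π : Prog A} :
    ProgRel G (l.foldr Prog.cup π) σ τ ↔ (∃ π' ∈ l, ProgRel G π' σ τ) ∨ ProgRel G π σ τ := by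
  induction l with
  | nil => simp
  | cons π' l ih => simp [ProgRel, ih, or_assoc]

def CallStep (p : List (A × A) → A × A → Prop) (σ τ : List (A × A)) : Prop :=
  ∃ c, p σ c ∧ τ = σ ++ [c]

variable [Fintype A]

lemma sat_ExForm : Sat G σ (ExForm A) ↔ AllExpert (doCalls G σ) := by
  simp only [ExForm, sat_listConj, List.forall_mem_map, sat_atomS]
  simp [pairsList, AllExpert]

variable [DecidableEq A] {P : Protocol A}

lemma sat_oneStepBody :
    Sat G σ (oneStepBody A P) ↔ AllExpert (doCalls G σ) ∨ ∃ c, Permits G P σ c := by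
  simp [oneStepBody, sat_ExForm, sat_listDisj, distinctPairs, pairsList, Permits]

lemma progRel_protProg :
    ProgRel G (protProg A P) σ τ ↔
      Relation.ReflTransGen (CallStep (Permits G P)) σ τ ∧ ∀ c, ¬ Permits G P τ c := by
  have step : ∀ ρ ρ', ProgRel G (((distinctPairs A).map (fun c =>
      Prog.seq (Prog.test (Form.conj (Form.atomN c.1 c.2) (P c.1 c.2))) (Prog.call c.1 c.2))).foldr
        Prog.cup (Prog.test (Form.neg Form.top))) ρ ρ' ↔ CallStep (Permits G P) ρ ρ' := by
    intro ρ ρ'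
    rw [progRel_foldr_cup]
    simp [ProgRel, Sat, CallStep, Permits, distinctPairs, pairsList]
    grind
  simp only [protProg, ProgRel, step, sat_listConj, List.forall_mem_map]
  simp [distinctPairs, pairsList, Permits]

lemma sat_diamond_protProg_ExForm :
    Sat G σ (Form.neg (Form.box (protProg A P) (Form.neg (ExForm A)))) ↔
      ∃ τ, Relation.ReflTransGen (CallStep (Permits G P)) σ τ ∧ (∀ c, ¬ Permits G P τ c) ∧
        AllExpert (doCalls G τ) := by
  simp [Sat, progRel_protProg, sat_ExForm]

lemma sat_softLookAhead {a b : A} :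
    Sat G σ (softLookAhead P a b) ↔ Sat G σ (P a b) ∧ ∃ τ, Epi G (Permits G P) a τ σ ∧
      (a ≠ b → (doCalls G τ).N a b → ∃ ρ,
        Relation.ReflTransGen (CallStep (Permits G P)) (τ ++ [(a, b)]) ρ ∧
          (∀ c, ¬ Permits G P ρ c) ∧ AllExpert (doCalls G ρ)) := by
  simp only [softLookAhead, sat_conj, sat_hatK, sat_box_call, sat_diamond_protProg_ExForm]

lemma sat_hardOneStep {a b : A} :
    Sat G σ (hardOneStep P a b) ↔ Sat G σ (P a b) ∧ ∀ τ, Epi G (Permits G P) a τ σ →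
      a ≠ b → (doCalls G τ).N a b →
        AllExpert (doCalls G (τ ++ [(a, b)])) ∨ ∃ c, Permits G P (τ ++ [(a, b)]) c := by
  simp only [hardOneStep, sat_conj, sat_K, sat_box_call, sat_oneStepBody]

end Semantics

section Runs

variable {G : GossipGraph A} {p q : List (A × A) → A × A → Prop} {σ τ : List (A × A)}

lemma Ext.mono (hpq : ∀ σ c, p σ c → q σ c) (h : Ext G p σ) : Ext G q σ := by
  induction h with
  | nil => exact .nil
  | snoc _ hc ih => exact .snoc ih (hpq _ _ hc)

lemma ext_append_singleton_iff {c : A × A} : Ext G p (σ ++ [c]) ↔ Ext G p σ ∧ p σ c := by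
  refine ⟨fun h => ?_, fun ⟨h, hc⟩ => .snoc h hc⟩
  generalize hl : σ ++ [c] = l at h
  cases h with
  | nil => simp at hl
  | snoc h hc =>
    obtain ⟨rfl, rfl⟩ := List.append_inj' hl rfl |>.imp_right List.singleton_inj.mp
    exact ⟨h, hc⟩

lemma Ext.of_append {ρ : List (A × A)} (h : Ext G p (σ ++ ρ)) : Ext G p σ := by
  induction ρ using List.reverseRecOn with
  | nil => simpa using h
  | append_singleton ρ c ih =>
    rw [← List.append_assoc, ext_append_singleton_iff] at h
    exact ih h.1

lemma Ext.reflTransGen_callStep {ρ : List (A × A)} (h : Ext G p (σ ++ ρ)) :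
    Relation.ReflTransGen (CallStep p) σ (σ ++ ρ) := by
  induction ρ using List.reverseRecOn with
  | nil => simpa using Relation.ReflTransGen.refl
  | append_singleton ρ c ih =>
    rw [← List.append_assoc, ext_append_singleton_iff] at h
    exact .tail (ih h.1) ⟨c, h.2, by simp⟩

lemma Epi.mono {a : A} (hpq : ∀ σ c, p σ c → q σ c) (h : Epi G p a τ σ) : Epi G q a τ σ := by
  induction h with
  | refl => exact .refl
  | call_out _ hN hS h₁ h₂ ih => exact .call_out ih hN hS (hpq _ _ h₁) (hpq _ _ h₂)
  | call_in _ hN hS h₁ h₂ ih => exact .call_in ih hN hS (hpq _ _ h₁) (hpq _ _ h₂)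
  | other _ hc hd he hf h₁ h₂ ih => exact .other ih hc hd he hf (hpq _ _ h₁) (hpq _ _ h₂)

lemma Ext.epi_self (a : A) (h : Ext G p σ) : Epi G p a σ σ := by
  induction h with
  | nil => exact .refl
  | @snoc σ c _ hc ih =>
    obtain ⟨b, d⟩ := c
    by_cases hb : b = a
    · subst hb; exact .call_out ih (fun _ => .rfl) (fun _ => .rfl) hc hc
    by_cases hd : d = a
    · subst hd; exact .call_in ih (fun _ => .rfl) (fun _ => .rfl) hc hc
    exact .other ih hb hd hb hd hc hc

/-- Every `p`-run from `σ` stops within `n - 1` calls without making all agents experts. -/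
def NoExpertsWithin (G : GossipGraph A) (p : List (A × A) → A × A → Prop) :
    ℕ → List (A × A) → Prop
  | 0, _ => False
  | n + 1, σ => ¬ AllExpert (doCalls G σ) ∧ ∀ c, p σ c → NoExpertsWithin G p n (σ ++ [c])

lemma NoExpertsWithin.not_allExpert {n : ℕ} (hn : NoExpertsWithin G p n σ)
    (h : Relation.ReflTransGen (CallStep p) σ τ) : ¬ AllExpert (doCalls G τ) := by
  induction h using Relation.ReflTransGen.head_induction_on generalizing n with
  | refl => cases n with
    | zero => exact hn.elim
    | succ n => exact hn.1
  | head hstep _ ih =>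
    obtain ⟨c, hc, rfl⟩ := hstep
    cases n with
    | zero => exact hn.elim
    | succ n => exact ih (hn.2 c hc)

variable [Fintype A] [DecidableEq A] {P : Protocol A}

lemma extension_softLookAhead_subset : extension (softLookAhead P) G ⊆ extension P G :=
  fun _ => Ext.mono fun _ _ ⟨hne, hN, hsat⟩ => ⟨hne, hN, (sat_softLookAhead.mp hsat).1⟩

def IsSuccessfulRun (G : GossipGraph A) (p : List (A × A) → A × A → Prop) (ρ : List (A × A)) :
    Prop :=
  Ext G p ρ ∧ (∀ c, ¬ p ρ c) ∧ AllExpert (doCalls G ρ)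

lemma IsSuccessfulRun.permits_softLookAhead {c : A × A} {ρ : List (A × A)}
    (h : IsSuccessfulRun G (Permits G P) (σ ++ c :: ρ)) : Permits G (softLookAhead P) σ c := by
  obtain ⟨hext, hterm, hex⟩ := h
  rw [← List.singleton_append, ← List.append_assoc] at hext hterm hex
  obtain ⟨hσ, hne, hN, hP⟩ := ext_append_singleton_iff.mp hext.of_append
  exact ⟨hne, hN, sat_softLookAhead.mpr ⟨hP, σ, hσ.epi_self c.1,
    fun _ _ => ⟨_, hext.reflTransGen_callStep, hterm, hex⟩⟩⟩

end Runs

section Decidability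

variable [DecidableEq A]

instance decidableRelDoCallN (G : GossipGraph A) [DecidableRel G.N] (c : A × A) :
    DecidableRel (doCall G c).N := fun x y => inferInstanceAs (Decidable (G.N x y ∨ _))

instance decidableRelDoCallS (G : GossipGraph A) [DecidableRel G.S] (c : A × A) :
    DecidableRel (doCall G c).S := fun x y => inferInstanceAs (Decidable (G.S x y ∨ _))

instance decidableRelDoCallsN :
    (σ : List (A × A)) → (G : GossipGraph A) → [DecidableRel G.N] → DecidableRel (doCalls G σ).N
  | [], G, _ => inferInstanceAs (DecidableRel G.N)
  | c :: σ, G, _ => decidableRelDoCallsN σ (doCall G c)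

instance decidableRelDoCallsS :
    (σ : List (A × A)) → (G : GossipGraph A) → [DecidableRel G.S] → DecidableRel (doCalls G σ).S
  | [], G, _ => inferInstanceAs (DecidableRel G.S)
  | c :: σ, G, _ => decidableRelDoCallsS σ (doCall G c)

instance [Fintype A] (G : GossipGraph A) [DecidableRel G.S] : Decidable (AllExpert G) :=
  inferInstanceAs (Decidable (∀ a b, G.S a b))

instance (G : GossipGraph A) [DecidableRel G.N] [DecidableRel G.S] (σ : List (A × A))
    (c : A × A) : Decidable (Permits G (LNSsyn A) σ c) :=
  inferInstanceAs (Decidable (c.1 ≠ c.2 ∧ (doCalls G σ).N c.1 c.2 ∧ ¬ (doCalls G σ).S c.1 c.2))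

instance decidableNoExpertsWithin [Fintype A] (G : GossipGraph A) [DecidableRel G.S]
    (p : List (A × A) → A × A → Prop) [∀ σ c, Decidable (p σ c)] :
    ∀ n σ, Decidable (NoExpertsWithin G p n σ)
  | 0, _ => isFalse id
  | n + 1, σ =>
    haveI := fun c => decidableNoExpertsWithin G p n (σ ++ [c])
    instDecidableAnd

end Decidability

section Enumeration

variable [DecidableEq A] {G : GossipGraph A} {p : List (A × A) → A × A → Prop}
  [∀ σ c, Decidable (p σ c)] {σ τ : List (A × A)} {a : A}

/-- The condition on the last calls `z` (actual) and `d` (alternative) in the clauses of `Epi`. -/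
def LooksAlike (a : A) (z d : A × A) : Prop :=
  (z.1 = a ∨ z.2 = a) ∧ d = z ∨ z.1 ≠ a ∧ z.2 ≠ a ∧ d.1 ≠ a ∧ d.2 ≠ a

instance (a : A) (z d : A × A) : Decidable (LooksAlike a z d) :=
  inferInstanceAs (Decidable (_ ∨ _))

/-- Contains every `τ` with `Epi G p a τ σ`, and possibly more: the conditions of `Epi` on the
state of `a`'s partner are not checked. -/
def epiCandidates [FinEnum A] (p : List (A × A) → A × A → Prop) [∀ σ c, Decidable (p σ c)]
    (a : A) (σ : List (A × A)) : List (List (A × A)) :=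
  σ.foldl (fun T z => T.flatMap fun τ =>
    ((FinEnum.toList (A × A)).filter fun d => decide (p τ d ∧ LooksAlike a z d)).map (τ ++ [·]))
    [[]]

lemma mem_epiCandidates_append_singleton [FinEnum A] {z : A × A} :
    τ ∈ epiCandidates p a (σ ++ [z]) ↔
      ∃ τ₀ ∈ epiCandidates p a σ, ∃ d, p τ₀ d ∧ LooksAlike a z d ∧ τ = τ₀ ++ [d] := by
  simp only [epiCandidates, List.foldl_append, List.foldl_cons, List.foldl_nil, List.mem_flatMap,
    List.mem_map, List.mem_filter, FinEnum.mem_toList, true_and, decide_eq_true_eq, and_assoc]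
  grind

lemma Epi.mem_epiCandidates [FinEnum A] (h : Epi G p a τ σ) : τ ∈ epiCandidates p a σ := by
  induction h with
  | refl => simp [epiCandidates]
  | call_out _ _ _ h _ ih | call_in _ _ _ h _ ih =>
    exact mem_epiCandidates_append_singleton.2 ⟨_, ih, _, h, by simp [LooksAlike], rfl⟩
  | other _ hc hd he hf h _ ih =>
    exact mem_epiCandidates_append_singleton.2 ⟨_, ih, _, h, .inr ⟨he, hf, hc, hd⟩, rfl⟩

lemma Permits.hardOneStep_of_epiCandidates [FinEnum A] {P : Protocol A}
    (hp : ∀ σ c, Permits G P σ c → p σ c) {b : A} (hP : Permits G P σ (a, b))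
    (h : ∀ τ ∈ epiCandidates p a σ, AllExpert (doCalls G (τ ++ [(a, b)])) ∨
      ∃ c, Permits G P (τ ++ [(a, b)]) c) :
    Permits G (hardOneStep P) σ (a, b) :=
  ⟨hP.1, hP.2.1, sat_hardOneStep.mpr
    ⟨hP.2.2, fun τ hτ _ _ => h τ (hτ.mono hp).mem_epiCandidates⟩⟩

variable [FinEnum A] {P : Protocol A} [∀ σ c, Decidable (Permits G P σ c)]

def MaySoftLookAheadPermit (G : GossipGraph A) (P : Protocol A)
    [∀ σ c, Decidable (Permits G P σ c)] (n : ℕ) (σ : List (A × A)) (c : A × A) : Prop :=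
  Permits G P σ c ∧ ∃ τ ∈ epiCandidates (Permits G P) c.1 σ,
    (doCalls G τ).N c.1 c.2 → ¬ NoExpertsWithin G (Permits G P) n (τ ++ [c])

instance [DecidableRel G.N] [DecidableRel G.S] (n : ℕ) (σ : List (A × A)) (c : A × A) :
    Decidable (MaySoftLookAheadPermit G P n σ c) :=
  inferInstanceAs (Decidable (_ ∧ _))

lemma Permits.maySoftLookAheadPermit {n : ℕ} {c : A × A}
    (h : Permits G (softLookAhead P) σ c) : MaySoftLookAheadPermit G P n σ c := by
  obtain ⟨hne, hN, hsat⟩ := h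
  obtain ⟨hP, τ, hτ, hrun⟩ := sat_softLookAhead.mp hsat
  refine ⟨⟨hne, hN, hP⟩, τ, hτ.mem_epiCandidates, fun hNτ hn => ?_⟩
  obtain ⟨ρ, hρ, -, hex⟩ := hrun hne hNτ
  exact hn.not_allExpert hρ hex

end Enumeration

instance : DecidableRel spaceship.N := fun x y =>
  inferInstanceAs (Decidable (x = y ∨ (x = 0 ∧ y = 1) ∨ (x = 3 ∧ y = 1) ∨ (x = 1 ∧ y = 2)))

instance : DecidableRel spaceship.S := fun x y => inferInstanceAs (Decidable (x = y))

local notation "LNS" => LNSsyn (Fin 4)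

local notation "LNS♦" => softLookAhead (LNSsyn (Fin 4))

-- No LNS sequence on the spaceship has more than five calls, so fuel 6 makes the search exact.
local notation "MayLNS♦" => MaySoftLookAheadPermit spaceship (LNSsyn (Fin 4)) 6

lemma isSuccessfulRun_01_31_12_02_32 :
    IsSuccessfulRun spaceship (Permits spaceship LNS) [(0, 1), (3, 1), (1, 2), (0, 2), (3, 2)] :=
  ⟨.snoc (.snoc (.snoc (.snoc (.snoc .nil (by decide)) (by decide)) (by decide)) (by decide))
    (by decide), by decide, by decide⟩

lemma isSuccessfulRun_01_31_32_02_12 :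
    IsSuccessfulRun spaceship (Permits spaceship LNS) [(0, 1), (3, 1), (3, 2), (0, 2), (1, 2)] :=
  ⟨.snoc (.snoc (.snoc (.snoc (.snoc .nil (by decide)) (by decide)) (by decide)) (by decide))
    (by decide), by decide, by decide⟩

lemma epiCandidates_3_01 : epiCandidates MayLNS♦ 3 [(0, 1)] = [[(0, 1)]] := by
  decide +kernel

lemma epiCandidates_1_01_31 : epiCandidates MayLNS♦ 1 [(0, 1), (3, 1)] = [[(0, 1), (3, 1)]] := by
  decide +kernel

lemma epiCandidates_0_01_31_12 :
    epiCandidates MayLNS♦ 0 [(0, 1), (3, 1), (1, 2)] =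
      [[(0, 1), (3, 1), (1, 2)], [(0, 1), (3, 1), (3, 2)]] := by
  decide +kernel

lemma epiCandidates_3_01_31_12_02 :
    epiCandidates MayLNS♦ 3 [(0, 1), (3, 1), (1, 2), (0, 2)] =
      [[(0, 1), (3, 1), (1, 2), (0, 2)]] := by
  decide +kernel

lemma mem_extension_hardOneStep_softLookAhead_spaceship :
    [(0, 1), (3, 1), (1, 2), (0, 2), (3, 2)] ∈ extension (hardOneStep LNS♦) spaceship := by
  have hq : ∀ σ c, Permits spaceship LNS♦ σ c → MayLNS♦ σ c :=
    fun _ _ => Permits.maySoftLookAheadPermit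
  have run := isSuccessfulRun_01_31_12_02_32
  have run' := isSuccessfulRun_01_31_32_02_12
  have h₁ : Permits spaceship (hardOneStep LNS♦) [] (0, 1) :=
    run.permits_softLookAhead.hardOneStep_of_epiCandidates hq <| by
      simp only [epiCandidates, List.foldl_nil, List.mem_singleton, forall_eq]
      exact .inr ⟨(3, 1), run.permits_softLookAhead⟩
  have h₂ : Permits spaceship (hardOneStep LNS♦) [(0, 1)] (3, 1) :=
    run.permits_softLookAhead.hardOneStep_of_epiCandidates hq <| by
      simp only [epiCandidates_3_01, List.mem_singleton, forall_eq]
      exact .inr ⟨(1, 2), run.permits_softLookAhead⟩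
  have h₃ : Permits spaceship (hardOneStep LNS♦) [(0, 1), (3, 1)] (1, 2) :=
    run.permits_softLookAhead.hardOneStep_of_epiCandidates hq <| by
      simp only [epiCandidates_1_01_31, List.mem_singleton, forall_eq]
      exact .inr ⟨(0, 2), run.permits_softLookAhead⟩
  have h₄ : Permits spaceship (hardOneStep LNS♦) [(0, 1), (3, 1), (1, 2)] (0, 2) :=
    run.permits_softLookAhead.hardOneStep_of_epiCandidates hq <| by
      simp only [epiCandidates_0_01_31_12, List.mem_cons, List.not_mem_nil, or_false,
        forall_eq_or_imp, forall_eq]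
      exact ⟨.inr ⟨(3, 2), run.permits_softLookAhead⟩, .inr ⟨(1, 2), run'.permits_softLookAhead⟩⟩
  have h₅ : Permits spaceship (hardOneStep LNS♦) [(0, 1), (3, 1), (1, 2), (0, 2)] (3, 2) :=
    run.permits_softLookAhead.hardOneStep_of_epiCandidates hq <| by
      simp only [epiCandidates_3_01_31_12_02, List.mem_singleton, forall_eq]
      exact .inl (by decide)
  exact .snoc (.snoc (.snoc (.snoc (.snoc .nil h₁) h₂) h₃) h₄) h₅

lemma not_mem_extension_hardOneStep_LNSsyn_spaceship :
    [(0, 1), (3, 1), (1, 2), (0, 2), (3, 2)] ∉ extension (hardOneStep LNS) spaceship := by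
  intro h
  replace h : Ext spaceship (Permits spaceship (hardOneStep LNS))
      ([(0, 1), (3, 1), (1, 2), (0, 2)] ++ [(3, 2)]) := h
  obtain ⟨-, -, -, hsat⟩ := ext_append_singleton_iff.mp h
  have h01_31 : Ext spaceship (Permits spaceship LNS) [(0, 1), (3, 1)] :=
    .snoc (.snoc .nil (by decide)) (by decide)
  have hepi : Epi spaceship (Permits spaceship LNS) 3
      [(0, 1), (3, 1), (0, 2), (1, 2)] [(0, 1), (3, 1), (1, 2), (0, 2)] :=
    .other (.other (h01_31.epi_self 3) (by decide) (by decide) (by decide) (by decide)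
      (by decide) (by decide)) (by decide) (by decide) (by decide) (by decide)
      (by decide) (by decide)
  exact absurd ((sat_hardOneStep.mp hsat).2 _ hepi (by decide) (by decide)) (by decide)

/-- Hard one-step strengthening is not monotone: on the spaceship graph, with
`Q = LNS^♦ ⊆ P = LNS`, the sequence `01;31;12;02;32` is in `Q^□(G)` but not in `P^□(G)`. -/
theorem hard_onestep_not_monotone :
    Initial spaceship ∧
    (∀ G : GossipGraph (Fin 4), Initial G →
      extension (softLookAhead (LNSsyn (Fin 4))) G ⊆ extension (LNSsyn (Fin 4)) G) ∧
    ([((0 : Fin 4), (1 : Fin 4)), (3, 1), (1, 2), (0, 2), (3, 2)] ∈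
      extension (hardOneStep (softLookAhead (LNSsyn (Fin 4)))) spaceship) ∧
    ([((0 : Fin 4), (1 : Fin 4)), (3, 1), (1, 2), (0, 2), (3, 2)] ∉
      extension (hardOneStep (LNSsyn (Fin 4))) spaceship) ∧
    ¬ (extension (hardOneStep (softLookAhead (LNSsyn (Fin 4)))) spaceship ⊆
        extension (hardOneStep (LNSsyn (Fin 4))) spaceship) :=
  ⟨fun _ _ => Iff.rfl, fun _ _ => extension_softLookAhead_subset,
    mem_extension_hardOneStep_softLookAhead_spaceship,
    not_mem_extension_hardOneStep_LNSsyn_spaceship,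
    fun hsub => not_mem_extension_hardOneStep_LNSsyn_spaceship
      (hsub mem_extension_hardOneStep_softLookAhead_spaceship)⟩

end Gossip
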